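/- Let s > 1 and assume ℱ satisfies assumptions (III) and (V). If a = {a_k}_{k∈ℤ} and b = {b_{j,k}}_{j∈ℕ,k∈ℤ} satisfy C_a := sup_k|a_k| < ∞ and C_b := sup_{j∈ℕ} 2^{3j/2} sup_k|b_{j,k}| < ∞, then f = Σ_{k∈ℤ} a_k φ_k + Σ_{j∈ℕ} Σ_{k∈ℤ} b_{j,k} ψ_{j,k} is a well-defined bounded function belonging to the Zygmund class Λ(ℝ), and there is a constant C > 0 depending only on the constants in (III) and (V) such that ‖f‖_∞ + |f|_Λ ≤ C·max(C_a, C_b), where |f|_Λ = sup_{x∈ℝ,h>0} |f(x+h) − 2f(x) + f(x−h)|/h. -/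

import Mathlib

open MeasureTheory Filter ENNReal

noncomputable section

namespace FrameReg

/-- A real-valued function on `ℝ` is bounded. -/
def Bdd (f : ℝ → ℝ) : Prop := ∃ M : ℝ, ∀ x, |f x| ≤ M

/-- Membership in the Zygmund class `Λ(ℝ)`. -/
def MemZygmundClass (g : ℝ → ℝ) : Prop :=
  ∃ M : ℝ, ∀ x h : ℝ, 0 < h → |g (x + h) - 2 * g x + g (x - h)| ≤ M * h

/-- The Hölder norm `‖f‖_{C^ρ}` (with `ρ = ⌊ρ⌋ + α`, `α ∈ [0,1)`) is bounded by `C`: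
all derivatives up to order `⌊ρ⌋` are bounded by `C` and the `⌊ρ⌋`-th derivative is
`α`-Hölder with constant `C`. -/
def HolderNormLE (ρ C : ℝ) (f : ℝ → ℝ) : Prop :=
  (∀ i : ℕ, i ≤ ⌊ρ⌋₊ → ∀ x : ℝ, |iteratedDeriv i f x| ≤ C) ∧
  ∀ x y : ℝ, x ≠ y →
    |iteratedDeriv ⌊ρ⌋₊ f x - iteratedDeriv ⌊ρ⌋₊ f y| ≤ C * |x - y| ^ (ρ - (⌊ρ⌋₊ : ℝ))

/-- Membership in the Hölder space `B^r_{∞,∞}(ℝ)` for noninteger `r > 0`,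
written `r = ⌊r⌋ + α` with `α ∈ (0,1)`: a bounded `C^{⌊r⌋}` function whose `⌊r⌋`-th
derivative is `α`-Hölder. -/
def MemHolderSpace (r : ℝ) (f : ℝ → ℝ) : Prop :=
  Bdd f ∧ ContDiff ℝ (⌊r⌋₊) f ∧
  ∃ M : ℝ, ∀ x h : ℝ, h ≠ 0 →
    |iteratedDeriv ⌊r⌋₊ f (x + h) - iteratedDeriv ⌊r⌋₊ f x| ≤ M * |h| ^ (r - (⌊r⌋₊ : ℝ))

/-- Membership in the Hölder–Zygmund space `B^n_{∞,∞}(ℝ)` for an integer `n ≥ 1`: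
a bounded `C^{n-1}` function whose `(n-1)`-st derivative is in the Zygmund class. -/
def MemZygmundSpace (n : ℕ) (f : ℝ → ℝ) : Prop :=
  Bdd f ∧ ContDiff ℝ ((n - 1 : ℕ)) f ∧ MemZygmundClass (iteratedDeriv (n - 1) f)

/-- Membership in the Hölder–Zygmund space `B^r_{∞,∞}(ℝ)`, `r > 0`. -/
def MemB (r : ℝ) (f : ℝ → ℝ) : Prop :=
  ((∀ n : ℕ, (n : ℝ) ≠ r) → MemHolderSpace r f) ∧
  ∀ n : ℕ, (n : ℝ) = r → MemZygmundSpace n f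

/-- All elements of the family `ℱ` are compactly supported. -/
def CompactlySupported (φ : ℤ → ℝ → ℝ) (ψ : ℕ+ → ℤ → ℝ → ℝ) : Prop :=
  (∀ k, HasCompactSupport (φ k)) ∧ ∀ j k, HasCompactSupport (ψ j k)

/-- Assumption (I): `ℱ` is a Parseval tight frame for `L²(ℝ)`, i.e. every `f ∈ L²(ℝ)`
equals `Σ_k ⟨f,φ_k⟩ φ_k + Σ_j Σ_k ⟨f,ψ_{j,k}⟩ ψ_{j,k}` with convergence in `L²`. -/
def AssumpI (φ : ℤ → ℝ → ℝ) (ψ : ℕ+ → ℤ → ℝ → ℝ)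
    (hφ : ∀ k, MemLp (φ k) 2 (volume : Measure ℝ))
    (hψ : ∀ j k, MemLp (ψ j k) 2 (volume : Measure ℝ)) : Prop :=
  ∀ f : Lp ℝ 2 (volume : Measure ℝ),
    HasSum (fun i : ℤ ⊕ ℕ+ × ℤ =>
      Sum.elim
        (fun k => (∫ x : ℝ, f x * φ k x) • (hφ k).toLp (φ k))
        (fun p => (∫ x : ℝ, f x * ψ p.1 p.2 x) • (hψ p.1 p.2).toLp (ψ p.1 p.2)) i) f

/-- Assumption (II): uniform bound on the measures of the supports. -/
def AssumpII (Csupp : ℝ) (φ : ℤ → ℝ → ℝ) (ψ : ℕ+ → ℤ → ℝ → ℝ) : Prop :=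
  (∀ k, volume (Function.support (φ k)) ≤ ENNReal.ofReal Csupp) ∧
  ∀ j k, volume (Function.support (ψ j k)) ≤
    ENNReal.ofReal (Csupp * (2:ℝ) ^ (-((j:ℕ):ℝ)))

/-- Assumption (III): control on the number of elements whose support meets a given
bounded interval. -/
def AssumpIII (CΓ : ℝ) (φ : ℤ → ℝ → ℝ) (ψ : ℕ+ → ℤ → ℝ → ℝ) : Prop :=
  ∀ a b : ℝ, a ≤ b →
    ({k : ℤ | (Function.support (φ k) ∩ Set.Icc a b).Nonempty}.Finite ∧
      (Nat.card {k : ℤ | (Function.support (φ k) ∩ Set.Icc a b).Nonempty} : ℝ) ≤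
        CΓ * ((b - a) + 1)) ∧
    ∀ j : ℕ+,
      {k : ℤ | (Function.support (ψ j k) ∩ Set.Icc a b).Nonempty}.Finite ∧
      (Nat.card {k : ℤ | (Function.support (ψ j k) ∩ Set.Icc a b).Nonempty} : ℝ) ≤
        CΓ * ((2:ℝ) ^ ((j:ℕ)) * (b - a) + 1)

/-- First part of assumption (IV): `v` vanishing moments. -/
def VanishingMoments (v : ℕ) (ψ : ℕ+ → ℤ → ℝ → ℝ) : Prop :=
  ∀ n : ℕ, n < v → ∀ (j : ℕ+) (k : ℤ), ∫ x : ℝ, x ^ n * ψ j k x = 0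

/-- Second part of assumption (IV): localization of the framelets around the centers
`xc j k`. -/
def Localization (v : ℕ) (ψ : ℕ+ → ℤ → ℝ → ℝ) (xc : ℕ+ → ℤ → ℝ) : Prop :=
  ∀ ρ : ℝ, 0 ≤ ρ → ρ ≤ (v : ℝ) → ∃ Cvm > (0:ℝ), ∀ (j : ℕ+) (k : ℤ),
    ∫ x : ℝ, |x| ^ ρ * |ψ j k (x + xc j k)| ≤ Cvm * (2:ℝ) ^ (-((j:ℕ):ℝ) * (ρ + 1/2))

/-- Assumption (V): `ℱ ⊂ C^s(ℝ)` together with quantitative bounds on the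
Hölder norms `‖·‖_{C^ρ}` for all `0 ≤ ρ ≤ s`. -/
def AssumpV (s : ℝ) (φ : ℤ → ℝ → ℝ) (ψ : ℕ+ → ℤ → ℝ → ℝ) : Prop :=
  (∀ k, ContDiff ℝ (⌊s⌋₊) (φ k)) ∧ (∀ j k, ContDiff ℝ (⌊s⌋₊) (ψ j k)) ∧
  ∀ ρ : ℝ, 0 ≤ ρ → ρ ≤ s → ∃ Csm > (0:ℝ),
    (∀ k, HolderNormLE ρ Csm (φ k)) ∧
    ∀ (j : ℕ+) (k : ℤ),
      HolderNormLE ρ (Csm * (2:ℝ) ^ (((j:ℕ):ℝ) * (ρ + 1/2))) (ψ j k)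

/-- The function `Σ_k a_k φ_k + Σ_j Σ_k b_{j,k} ψ_{j,k}`. -/
def frameSum (φ : ℤ → ℝ → ℝ) (ψ : ℕ+ → ℤ → ℝ → ℝ)
    (a : ℤ → ℝ) (b : ℕ+ → ℤ → ℝ) : ℝ → ℝ :=
  fun x => (∑' k : ℤ, a k * φ k x) + ∑' p : ℕ+ × ℤ, b p.1 p.2 * ψ p.1 p.2 x

/-- `f = Σ_k a_k φ_k + Σ_j Σ_k b_{j,k} ψ_{j,k}` pointwise, the `φ`-sum having finitely
many nonzero terms at each point and the `ψ`-sum converging absolutely. -/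
def Represents (φ : ℤ → ℝ → ℝ) (ψ : ℕ+ → ℤ → ℝ → ℝ)
    (a : ℤ → ℝ) (b : ℕ+ → ℤ → ℝ) (f : ℝ → ℝ) : Prop :=
  (∀ x : ℝ, {k : ℤ | φ k x ≠ 0}.Finite) ∧
  (∀ x : ℝ, Summable fun p : ℕ+ × ℤ => |b p.1 p.2 * ψ p.1 p.2 x|) ∧
  ∀ x : ℝ, f x = frameSum φ ψ a b x

/-- `(a,b) ∈ ℓ^r_{∞,∞}`: the norm
`max(sup_k |a_k|, sup_j 2^{j(r+1/2)} sup_k |b_{j,k}|)` is finite. -/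
def SeqNormFin (r : ℝ) (a : ℤ → ℝ) (b : ℕ+ → ℤ → ℝ) : Prop :=
  ∃ C : ℝ, (∀ k, |a k| ≤ C) ∧
    ∀ (j : ℕ+) (k : ℤ), (2:ℝ) ^ (((j:ℕ):ℝ) * (r + 1/2)) * |b j k| ≤ C

/-- Powers of a bi-infinite matrix (rows and columns indexed by `ℤ`). -/
def matPow (Z : ℤ → ℤ → ℝ) : ℕ → ℤ → ℤ → ℝ
  | 0 => fun m i => if m = i then 1 else 0
  | n + 1 => fun m i => ∑' p : ℤ, Z m p * matPow Z n p i

/-- The Besov norm `‖f‖_{B^r_{∞,∞}} = max(‖f‖_∞, sup_j 2^{jr} ω^{⌊r⌋+1}_∞(f,2^{-j}))`,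
valued in `ℝ≥0∞`. -/
def besovNorm (r : ℝ) (f : ℝ → ℝ) : ℝ≥0∞ :=
  max (⨆ x : ℝ, ENNReal.ofReal |f x|)
    (⨆ j : ℕ+, ENNReal.ofReal ((2:ℝ) ^ (((j:ℕ):ℝ) * r)) *
      ⨆ (h : ℝ) (_ : |h| ≤ (2:ℝ) ^ (-((j:ℕ):ℝ))) (x : ℝ),
        ENNReal.ofReal
          (abs (∑ l ∈ Finset.range (⌊r⌋₊ + 2),
            ((⌊r⌋₊ + 1).choose l : ℝ) * (-1) ^ (⌊r⌋₊ + 1 - l) * f (x + (l:ℝ) * h))))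

/-- The sequence norm `‖(a,b)‖_{ℓ^r_{∞,∞}}`, valued in `ℝ≥0∞`. -/
def seqNorm (r : ℝ) (a : ℤ → ℝ) (b : ℕ+ → ℤ → ℝ) : ℝ≥0∞ :=
  max (⨆ k : ℤ, ENNReal.ofReal |a k|)
    (⨆ j : ℕ+, ENNReal.ofReal ((2:ℝ) ^ (((j:ℕ):ℝ) * (r + 1/2))) *
      ⨆ k : ℤ, ENNReal.ofReal |b j k|)

end FrameReg

/-!
Write `f = Φ + Ψ` with `Φ = Σ_k a_k φ_k` and `Ψ = Σ_j T_j`, `T_j = Σ_k b_{j,k} ψ_{j,k}`.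
By (III) only `O(1)` terms of `Φ` or of a single `T_j` are nonzero near a point, so
`|Φ| ≲ C_a` and `|T_j| ≲ 2^{-3j/2} · 2^{j/2} C_b = 2^{-j} C_b`, which sums to the bound on `‖f‖_∞`.

For the second difference `Δ²_h g(x) = g(x+h) - 2g(x) + g(x-h)` take `ρ = 1 + α` in (V), with
`α = min(s - 1, 1/2)`: by the mean value theorem a function whose derivative is `α`-Hölder with
constant `L` has `|Δ²_h g| ≤ L (2h)^α h`. At level `j` this gives
`|Δ²_h T_j| ≲ (2^j h)^α h` as long as `2^j h ≤ 1`, while trivially `|Δ²_h T_j| ≲ 2^{-j}`.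
The first bound summed over `2^j h ≤ 1` is a geometric series dominated by its last term, the
second summed over `2^j h > 1` is dominated by its first term; both are `O(h)`.
-/

namespace FrameReg

open Set Function

def secondDiff (g : ℝ → ℝ) (x h : ℝ) : ℝ := g (x + h) - 2 * g x + g (x - h)

lemma secondDiff_add (f g : ℝ → ℝ) (x h : ℝ) :
    secondDiff (fun y => f y + g y) x h = secondDiff f x h + secondDiff g x h := by
  simp only [secondDiff]; ring

lemma secondDiff_const_mul (c : ℝ) (g : ℝ → ℝ) (x h : ℝ) :
    secondDiff (fun y => c * g y) x h = c * secondDiff g x h := by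
  simp only [secondDiff]; ring

lemma secondDiff_tsum {ι : Type*} {F : ι → ℝ → ℝ} {x h : ℝ}
    (h₁ : Summable fun i => F i (x + h)) (h₀ : Summable fun i => F i x)
    (h₂ : Summable fun i => F i (x - h)) :
    secondDiff (fun y => ∑' i, F i y) x h = ∑' i, secondDiff (F i) x h := by
  simp only [secondDiff]
  rw [(h₁.sub (h₀.mul_left 2)).tsum_add h₂, h₁.tsum_sub (h₀.mul_left 2), tsum_mul_left]

lemma abs_secondDiff_le_four_mul {g : ℝ → ℝ} {B : ℝ} (hg : ∀ y, |g y| ≤ B) (x h : ℝ) :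
    |secondDiff g x h| ≤ 4 * B := by
  have h₁ := abs_le.1 (hg (x + h))
  have h₀ := abs_le.1 (hg x)
  have h₂ := abs_le.1 (hg (x - h))
  rw [secondDiff, abs_le]
  constructor <;> linarith

lemma abs_secondDiff_le_of_holder_deriv {g : ℝ → ℝ} (hg : Differentiable ℝ g) {L β : ℝ}
    (hL : 0 ≤ L) (hβ : 0 ≤ β)
    (hHol : ∀ u v, u ≠ v → |deriv g u - deriv g v| ≤ L * |u - v| ^ β) (x : ℝ) {h : ℝ}
    (hh : 0 < h) :
    |secondDiff g x h| ≤ L * (2 * h) ^ β * h := by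
  obtain ⟨ξ₁, ⟨hξ₁l, hξ₁r⟩, hd₁⟩ := exists_deriv_eq_slope g (by linarith : x < x + h)
    hg.continuous.continuousOn hg.differentiableOn
  obtain ⟨ξ₂, ⟨hξ₂l, hξ₂r⟩, hd₂⟩ := exists_deriv_eq_slope g (by linarith : x - h < x)
    hg.continuous.continuousOn hg.differentiableOn
  have hΔ : secondDiff g x h = h * (deriv g ξ₁ - deriv g ξ₂) := by
    rw [hd₁, hd₂, secondDiff, show x + h - x = h by ring, show x - (x - h) = h by ring]
    field_simp
    ring
  have hder : |deriv g ξ₁ - deriv g ξ₂| ≤ L * (2 * h) ^ β := by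
    rcases eq_or_ne ξ₁ ξ₂ with rfl | hne
    · rw [sub_self, abs_zero]; positivity
    · have hdist : |ξ₁ - ξ₂| ≤ 2 * h := abs_le.2 ⟨by linarith, by linarith⟩
      exact (hHol _ _ hne).trans
        (mul_le_mul_of_nonneg_left (Real.rpow_le_rpow (abs_nonneg _) hdist hβ) hL)
  rw [hΔ, abs_mul, abs_of_pos hh]
  calc h * |deriv g ξ₁ - deriv g ξ₂| ≤ h * (L * (2 * h) ^ β) :=
        mul_le_mul_of_nonneg_left hder hh.le
    _ = L * (2 * h) ^ β * h := by ring

lemma HolderNormLE.abs_le {ρ C : ℝ} {f : ℝ → ℝ} (hf : HolderNormLE ρ C f) (x : ℝ) :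
    |f x| ≤ C := by
  simpa using hf.1 0 (Nat.zero_le _) x

lemma HolderNormLE.abs_secondDiff_le {α C : ℝ} {f : ℝ → ℝ} (hf : HolderNormLE (1 + α) C f)
    (hα0 : 0 ≤ α) (hα1 : α < 1) (hd : Differentiable ℝ f) (x : ℝ) {h : ℝ} (hh : 0 < h) :
    |secondDiff f x h| ≤ C * (2 * h) ^ α * h := by
  have hfloor : ⌊1 + α⌋₊ = 1 := by
    rw [Nat.floor_eq_iff (by linarith)]
    constructor <;> push_cast <;> linarith
  refine abs_secondDiff_le_of_holder_deriv hd ((abs_nonneg _).trans (hf.abs_le 0)) hα0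
    (fun u v huv => ?_) x hh
  simpa [hfloor] using hf.2 u v huv

lemma abs_tsum_le_tsum_abs {ι : Type*} {f : ι → ℝ} (hf : Summable fun i => |f i|) :
    |∑' i, f i| ≤ ∑' i, |f i| := by
  simpa only [Real.norm_eq_abs] using norm_tsum_le_tsum_norm (f := f) (by simpa using hf)

lemma tsum_abs_le_natCard_mul {ι : Type*} {f : ι → ℝ} {S : Set ι} (hS : S.Finite)
    (hf : support f ⊆ S) {M : ℝ} (hM : ∀ i, |f i| ≤ M) :
    ∑' i, |f i| ≤ Nat.card S * M := by
  classical
  rw [tsum_eq_sum (s := hS.toFinset) fun i hi => by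
    rw [abs_eq_zero]; exact notMem_support.1 fun h => hi (hS.mem_toFinset.2 (hf h))]
  calc ∑ i ∈ hS.toFinset, |f i| ≤ hS.toFinset.card • M :=
        Finset.sum_le_card_nsmul _ _ _ fun i _ => hM i
    _ = Nat.card S * M := by
        rw [nsmul_eq_mul, Nat.card_coe_set_eq, Set.ncard_eq_toFinset_card _ hS]

variable {ι : Type*}

def SupportCountLE (g : ι → ℝ → ℝ) (C r : ℝ) : Prop :=
  ∀ a b : ℝ, a ≤ b → {i | (support (g i) ∩ Icc a b).Nonempty}.Finite ∧
    (Nat.card {i | (support (g i) ∩ Icc a b).Nonempty} : ℝ) ≤ C * (r * (b - a) + 1)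

lemma AssumpIII.supportCountLE_phi {CΓ : ℝ} {φ : ℤ → ℝ → ℝ} {ψ : ℕ+ → ℤ → ℝ → ℝ}
    (h : AssumpIII CΓ φ ψ) : SupportCountLE φ CΓ 1 := fun a b hab => by
  simpa only [one_mul] using (h a b hab).1

lemma AssumpIII.supportCountLE_psi {CΓ : ℝ} {φ : ℤ → ℝ → ℝ} {ψ : ℕ+ → ℤ → ℝ → ℝ}
    (h : AssumpIII CΓ φ ψ) (j : ℕ+) : SupportCountLE (ψ j) CΓ (2 ^ (j : ℕ)) :=
  fun a b hab => (h a b hab).2 j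

lemma support_mul_apply_subset (g : ι → ℝ → ℝ) (c : ι → ℝ) (x : ℝ) :
    support (fun i => c i * g i x) ⊆ {i | (support (g i) ∩ Icc x x).Nonempty} :=
  fun _ hi => ⟨x, right_ne_zero_of_mul hi, left_mem_Icc.2 le_rfl⟩

lemma support_mul_secondDiff_subset (g : ι → ℝ → ℝ) (c : ι → ℝ) (x : ℝ) {h : ℝ} (hh : 0 ≤ h) :
    support (fun i => c i * secondDiff (g i) x h) ⊆
      {i | (support (g i) ∩ Icc (x - h) (x + h)).Nonempty} := by
  intro i hi
  by_contra hout
  have hzero : ∀ y ∈ Icc (x - h) (x + h), g i y = 0 := fun y hy =>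
    notMem_support.1 fun hy' => hout ⟨y, hy', hy⟩
  apply hi
  simp only [secondDiff, hzero (x + h) ⟨by linarith, le_rfl⟩, hzero x ⟨by linarith, by linarith⟩,
    hzero (x - h) ⟨le_rfl, by linarith⟩]
  ring

namespace SupportCountLE

variable {g : ι → ℝ → ℝ} {C r : ℝ}

lemma finite_ne_zero (hg : SupportCountLE g C r) (x : ℝ) : {i | g i x ≠ 0}.Finite :=
  (hg x x le_rfl).1.subset fun _ hi => ⟨x, hi, left_mem_Icc.2 le_rfl⟩

lemma summable_of_support_subset (hg : SupportCountLE g C r) {a b : ℝ} (hab : a ≤ b)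
    {f : ι → ℝ} (hf : support f ⊆ {i | (support (g i) ∩ Icc a b).Nonempty}) : Summable f :=
  summable_of_hasFiniteSupport ((hg a b hab).1.subset hf)

lemma tsum_abs_le_of_support_subset (hg : SupportCountLE g C r) {a b : ℝ} (hab : a ≤ b)
    {f : ι → ℝ} (hf : support f ⊆ {i | (support (g i) ∩ Icc a b).Nonempty}) {M : ℝ}
    (hM0 : 0 ≤ M) (hM : ∀ i, |f i| ≤ M) :
    ∑' i, |f i| ≤ C * (r * (b - a) + 1) * M :=
  (tsum_abs_le_natCard_mul (hg a b hab).1 hf hM).trans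
    (mul_le_mul_of_nonneg_right (hg a b hab).2 hM0)

lemma summable_mul_apply (hg : SupportCountLE g C r) (c : ι → ℝ) (x : ℝ) :
    Summable fun i => c i * g i x :=
  hg.summable_of_support_subset le_rfl (support_mul_apply_subset g c x)

lemma tsum_abs_mul_apply_le (hg : SupportCountLE g C r) {c : ι → ℝ} {x M : ℝ} (hM0 : 0 ≤ M)
    (hM : ∀ i, |c i * g i x| ≤ M) : ∑' i, |c i * g i x| ≤ C * M := by
  simpa using hg.tsum_abs_le_of_support_subset le_rfl (support_mul_apply_subset g c x) hM0 hM

lemma abs_tsum_mul_apply_le (hg : SupportCountLE g C r) {c : ι → ℝ} {x M : ℝ} (hM0 : 0 ≤ M)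
    (hM : ∀ i, |c i * g i x| ≤ M) : |∑' i, c i * g i x| ≤ C * M :=
  (abs_tsum_le_tsum_abs (f := fun i => c i * g i x) (hg.summable_mul_apply c x).abs).trans
    (hg.tsum_abs_mul_apply_le hM0 hM)

lemma abs_secondDiff_tsum_le (hg : SupportCountLE g C r) {c : ι → ℝ} {x h M : ℝ} (hh : 0 ≤ h)
    (hM0 : 0 ≤ M) (hM : ∀ i, |c i * secondDiff (g i) x h| ≤ M) :
    |secondDiff (fun y => ∑' i, c i * g i y) x h| ≤ C * (r * (2 * h) + 1) * M := by
  have hsupp := support_mul_secondDiff_subset g c x hh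
  rw [secondDiff_tsum (F := fun i y => c i * g i y) (hg.summable_mul_apply c _)
    (hg.summable_mul_apply c _) (hg.summable_mul_apply c _)]
  simp only [secondDiff_const_mul]
  calc |∑' i, c i * secondDiff (g i) x h| ≤ ∑' i, |c i * secondDiff (g i) x h| :=
        abs_tsum_le_tsum_abs (f := fun i => c i * secondDiff (g i) x h)
          (hg.summable_of_support_subset (by linarith) hsupp).abs
    _ ≤ C * (r * (x + h - (x - h)) + 1) * M :=
        hg.tsum_abs_le_of_support_subset (by linarith) hsupp hM0 hM
    _ = C * (r * (2 * h) + 1) * M := by ring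

lemma abs_secondDiff_tsum_le_of_unit_scale (hg : SupportCountLE g C 1) (hC : 0 ≤ C)
    {c : ι → ℝ} {A B L α : ℝ} (hA : 0 ≤ A) (hB : 0 ≤ B) (hL : 0 ≤ L) (hα0 : 0 ≤ α)
    (hα1 : α ≤ 1) (hc : ∀ i, |c i| ≤ A) (hg0 : ∀ i y, |g i y| ≤ B)
    (hg2 : ∀ i x h, 0 < h → |secondDiff (g i) x h| ≤ L * (2 * h) ^ α * h) (x : ℝ) {h : ℝ}
    (hh : 0 < h) :
    |secondDiff (fun y => ∑' i, c i * g i y) x h| ≤ C * A * (6 * L + 4 * B) * h := by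
  rcases le_or_gt h 1 with hh1 | hh1
  · have h2h : (2 * h) ^ α ≤ 2 :=
      (Real.rpow_le_rpow (by positivity) (by linarith : 2 * h ≤ 2) hα0).trans
        (by simpa using Real.rpow_le_rpow_of_exponent_le (by norm_num : (1:ℝ) ≤ 2) hα1)
    have hterm : ∀ i, |c i * secondDiff (g i) x h| ≤ A * (2 * L * h) := fun i => by
      have hLh := mul_le_mul_of_nonneg_right (mul_le_mul_of_nonneg_left h2h hL) hh.le
      rw [abs_mul]
      exact mul_le_mul (hc i) ((hg2 i x h hh).trans (by linarith)) (abs_nonneg _) hA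
    calc |secondDiff (fun y => ∑' i, c i * g i y) x h|
        ≤ C * (1 * (2 * h) + 1) * (A * (2 * L * h)) :=
          hg.abs_secondDiff_tsum_le hh.le (by positivity) hterm
      _ ≤ C * 3 * (A * (2 * L * h)) := by gcongr; linarith
      _ = C * A * (6 * L) * h := by ring
      _ ≤ C * A * (6 * L + 4 * B) * h := by gcongr; linarith
  · have hS : ∀ y, |∑' i, c i * g i y| ≤ C * (A * B) := fun y =>
      hg.abs_tsum_mul_apply_le (by positivity) fun i => by
        rw [abs_mul]; exact mul_le_mul (hc i) (hg0 i y) (abs_nonneg _) hA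
    calc |secondDiff (fun y => ∑' i, c i * g i y) x h| ≤ 4 * (C * (A * B)) :=
          abs_secondDiff_le_four_mul hS x h
      _ = C * A * (4 * B) * 1 := by ring
      _ ≤ C * A * (6 * L + 4 * B) * h := by gcongr; linarith

end SupportCountLE

lemma tsum_le_of_dyadic {α h K₁ K₂ : ℝ} (hα0 : 0 < α) (hα1 : α ≤ 1) (hh : 0 < h)
    (hK₁ : 0 ≤ K₁) {d : ℕ → ℝ} (hd0 : ∀ n, 0 ≤ d n) (hbig : ∀ n, d n ≤ K₂ * (1 / 2) ^ n)
    (hsmall : ∀ n, 2 ^ n * h ≤ 1 → d n ≤ K₁ * (2 ^ n * h) ^ α * h) :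
    ∑' n, d n ≤ (2 * K₁ / (2 ^ α - 1) + 2 * K₂) * h := by
  classical
  have hK₂ : 0 ≤ K₂ := by simpa using (hd0 0).trans (hbig 0)
  have hr : 1 < (2:ℝ) ^ α := Real.one_lt_rpow (by norm_num) hα0
  have hex : ∃ n, 1 < (2:ℝ) ^ n * h := by
    obtain ⟨n, hn⟩ := pow_unbounded_of_one_lt (1 / h) (by norm_num : (1:ℝ) < 2)
    exact ⟨n, by rwa [div_lt_iff₀ hh] at hn⟩
  set m := Nat.find hex
  have hm : 1 < (2:ℝ) ^ m * h := Nat.find_spec hex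
  have hlt : ∀ n < m, (2:ℝ) ^ n * h ≤ 1 := fun n hn => not_lt.1 (Nat.find_min hex hn)
  have hsum : Summable d :=
    .of_nonneg_of_le hd0 hbig (summable_geometric_two.mul_left K₂)
  -- below `m` the terms grow geometrically with ratio `2^α`, so their sum is at most a multiple
  -- of the last one, which is `O(h)` because `2^(m-1) h ≤ 1`
  have hhead : ∑ n ∈ Finset.range m, d n ≤ 2 * K₁ / (2 ^ α - 1) * h := by
    have hpow : ∀ n : ℕ, ((2:ℝ) ^ n * h) ^ α = ((2:ℝ) ^ α) ^ n * h ^ α := fun n => by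
      rw [Real.mul_rpow (by positivity) hh.le, Real.rpow_pow_comm (by norm_num)]
    have hlast : h ^ α * (((2:ℝ) ^ α) ^ m - 1) ≤ 2 := by
      rcases Nat.eq_zero_or_pos m with hm0 | hm0
      · rw [hm0]; norm_num
      · obtain ⟨k, hk⟩ := Nat.exists_eq_add_one_of_ne_zero hm0.ne'
        have h2m : (2:ℝ) ^ m * h ≤ 2 := by
          have := hlt k (by omega)
          rw [hk, pow_succ]; linarith
        calc h ^ α * (((2:ℝ) ^ α) ^ m - 1) ≤ ((2:ℝ) ^ α) ^ m * h ^ α := by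
              nlinarith [Real.rpow_nonneg hh.le α]
          _ = ((2:ℝ) ^ m * h) ^ α := (hpow m).symm
          _ ≤ 2 ^ α := Real.rpow_le_rpow (by positivity) h2m hα0.le
          _ ≤ 2 := by
              simpa using Real.rpow_le_rpow_of_exponent_le (by norm_num : (1:ℝ) ≤ 2) hα1
    calc ∑ n ∈ Finset.range m, d n
        ≤ ∑ n ∈ Finset.range m, K₁ * h * h ^ α * ((2:ℝ) ^ α) ^ n :=
          Finset.sum_le_sum fun n hn =>
            (hsmall n (hlt n (Finset.mem_range.1 hn))).trans_eq (by rw [hpow]; ring)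
      _ = K₁ * h * (h ^ α * (((2:ℝ) ^ α) ^ m - 1)) / (2 ^ α - 1) := by
          rw [← Finset.mul_sum, geom_sum_eq hr.ne']; ring
      _ ≤ K₁ * h * 2 / (2 ^ α - 1) := by gcongr
      _ = 2 * K₁ / (2 ^ α - 1) * h := by ring
  have htail : ∑' i, d (i + m) ≤ 2 * K₂ * h := by
    have hm' : (1 / 2 : ℝ) ^ m < h := by
      rw [div_pow, one_pow, div_lt_iff₀ (by positivity)]; linarith
    calc ∑' i, d (i + m) ≤ ∑' i, K₂ * (1 / 2) ^ m * (1 / 2) ^ i :=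
          (hsum.comp_injective (add_left_injective m)).tsum_le_tsum
            (fun i => (hbig (i + m)).trans_eq (by ring))
            (summable_geometric_two.mul_left _)
      _ = 2 * K₂ * (1 / 2) ^ m := by rw [tsum_mul_left, tsum_geometric_two]; ring
      _ ≤ 2 * K₂ * h := by gcongr
  rw [← hsum.sum_add_tsum_nat_add m]
  linarith

lemma tsum_pnat_le_of_dyadic {α h K₁ K₂ : ℝ} (hα0 : 0 < α) (hα1 : α ≤ 1) (hh : 0 < h)
    (hK₁ : 0 ≤ K₁) {e : ℕ+ → ℝ} (he0 : ∀ j, 0 ≤ e j) (hbig : ∀ j, e j ≤ K₂ * (1 / 2) ^ (j : ℕ))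
    (hsmall : ∀ j : ℕ+, 2 ^ (j : ℕ) * h ≤ 1 → e j ≤ K₁ * (2 ^ (j : ℕ) * h) ^ α * h) :
    ∑' j, e j ≤ 2 * (2 * K₁ / (2 ^ α - 1) + 2 * K₂) * h := by
  have hK₂ : 0 ≤ K₂ := by simpa using (he0 1).trans (hbig 1)
  rw [← Equiv.pnatEquivNat.symm.tsum_eq, Equiv.pnatEquivNat_symm_apply]
  -- index `n` stands for level `n + 1`; the scale `2^(n+1) h` is `2^n (2h)`
  refine (tsum_le_of_dyadic (h := 2 * h) (K₂ := K₂) hα0 hα1 (by positivity) hK₁ (fun n => he0 _)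
    (fun n => (hbig _).trans ?_) (fun n hn => (hsmall _ ?_).trans ?_)).trans_eq (by ring)
  · rw [Nat.succPNat_coe, pow_succ]
    nlinarith [pow_nonneg (by norm_num : (0:ℝ) ≤ 1 / 2) n]
  · rwa [Nat.succPNat_coe, pow_succ, mul_assoc]
  · rw [Nat.succPNat_coe, pow_succ, mul_assoc (2 ^ n)]
    exact mul_le_mul_of_nonneg_left (by linarith) (by positivity)

lemma summable_geometric_two_pnat : Summable fun j : ℕ+ => (1 / 2 : ℝ) ^ (j : ℕ) :=
  summable_geometric_two.comp_injective PNat.coe_injective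

lemma tsum_geometric_two_pnat : ∑' j : ℕ+, (1 / 2 : ℝ) ^ (j : ℕ) = 1 := by
  rw [tsum_pnat_eq_tsum_succ (f := fun n => (1 / 2 : ℝ) ^ n)]
  simp only [pow_succ]
  rw [tsum_mul_right, tsum_geometric_two]
  norm_num

section Levels

variable {ψ : ℕ+ → ι → ℝ → ℝ} {b : ℕ+ → ι → ℝ} {C M : ℝ}

lemma summable_abs_prod_levels (hcount : ∀ j : ℕ+, SupportCountLE (ψ j) C (2 ^ (j : ℕ)))
    (hM : 0 ≤ M) (h0 : ∀ j i y, |b j i * ψ j i y| ≤ M * (1 / 2) ^ (j : ℕ)) (y : ℝ) :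
    Summable fun p : ℕ+ × ι => |b p.1 p.2 * ψ p.1 p.2 y| := by
  rw [summable_prod_of_nonneg fun _ => abs_nonneg _]
  exact ⟨fun j => ((hcount j).summable_mul_apply (b j) y).abs,
    (summable_geometric_two_pnat.mul_left (C * M)).of_nonneg_of_le
      (fun _ => tsum_nonneg fun _ => abs_nonneg _)
      fun j => ((hcount j).tsum_abs_mul_apply_le (by positivity) (h0 j · y)).trans_eq (by ring)⟩

lemma abs_tsum_prod_levels_le (hcount : ∀ j : ℕ+, SupportCountLE (ψ j) C (2 ^ (j : ℕ)))
    (hM : 0 ≤ M) (h0 : ∀ j i y, |b j i * ψ j i y| ≤ M * (1 / 2) ^ (j : ℕ)) (y : ℝ) :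
    |∑' p : ℕ+ × ι, b p.1 p.2 * ψ p.1 p.2 y| ≤ C * M := by
  have habs := summable_abs_prod_levels hcount hM h0 y
  calc |∑' p : ℕ+ × ι, b p.1 p.2 * ψ p.1 p.2 y|
      ≤ ∑' p : ℕ+ × ι, |b p.1 p.2 * ψ p.1 p.2 y| := abs_tsum_le_tsum_abs habs
    _ = ∑' j, ∑' i, |b j i * ψ j i y| :=
        habs.tsum_prod' fun j => ((hcount j).summable_mul_apply (b j) y).abs
    _ ≤ ∑' j : ℕ+, C * M * (1 / 2) ^ (j : ℕ) :=
        (((summable_prod_of_nonneg fun _ => abs_nonneg _).1 habs).2).tsum_le_tsum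
          (fun j => ((hcount j).tsum_abs_mul_apply_le (by positivity) (h0 j · y)).trans_eq
            (by ring))
          (summable_geometric_two_pnat.mul_left _)
    _ = C * M := by rw [tsum_mul_left, tsum_geometric_two_pnat, mul_one]

lemma abs_secondDiff_tsum_prod_levels_le
    (hcount : ∀ j : ℕ+, SupportCountLE (ψ j) C (2 ^ (j : ℕ))) (hC : 0 ≤ C) (hM : 0 ≤ M)
    (h0 : ∀ j i y, |b j i * ψ j i y| ≤ M * (1 / 2) ^ (j : ℕ)) {K α : ℝ} (hK : 0 ≤ K)
    (hα0 : 0 < α) (hα1 : α ≤ 1)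
    (h2 : ∀ j i x h, 0 < h →
      |b j i * secondDiff (ψ j i) x h| ≤ K * (2 ^ (j : ℕ) * (2 * h)) ^ α * h)
    (x : ℝ) {h : ℝ} (hh : 0 < h) :
    |secondDiff (fun y => ∑' p : ℕ+ × ι, b p.1 p.2 * ψ p.1 p.2 y) x h| ≤
      C * (24 * K / (2 ^ α - 1) + 16 * M) * h := by
  set T : ℕ+ → ℝ → ℝ := fun j y => ∑' i, b j i * ψ j i y
  have hT0 : ∀ j y, |T j y| ≤ C * M * (1 / 2) ^ (j : ℕ) := fun j y =>
    ((hcount j).abs_tsum_mul_apply_le (by positivity) (h0 j · y)).trans_eq (by ring)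
  have hTsum : ∀ y, Summable fun j => T j y := fun y =>
    ((summable_geometric_two_pnat.mul_left (C * M)).of_nonneg_of_le (fun _ => abs_nonneg _)
      (hT0 · y)).of_abs
  have hΨ : (fun y => ∑' p : ℕ+ × ι, b p.1 p.2 * ψ p.1 p.2 y) = fun y => ∑' j, T j y :=
    funext fun y => (summable_abs_prod_levels hcount hM h0 y).of_abs.tsum_prod'
      fun j => (hcount j).summable_mul_apply (b j) y
  have hbig : ∀ j : ℕ+, |secondDiff (T j) x h| ≤ 4 * C * M * (1 / 2) ^ (j : ℕ) := fun j =>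
    (abs_secondDiff_le_four_mul (hT0 j) x h).trans_eq (by ring)
  have hsmall : ∀ j : ℕ+, 2 ^ (j : ℕ) * h ≤ 1 →
      |secondDiff (T j) x h| ≤ 6 * C * K * (2 ^ (j : ℕ) * h) ^ α * h := by
    intro j hj
    have hscale : ((2:ℝ) ^ (j : ℕ) * (2 * h)) ^ α ≤ 2 * ((2:ℝ) ^ (j : ℕ) * h) ^ α := by
      rw [show (2:ℝ) ^ (j : ℕ) * (2 * h) = 2 * (2 ^ (j : ℕ) * h) by ring,
        Real.mul_rpow (by norm_num) (by positivity)]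
      gcongr
      simpa using Real.rpow_le_rpow_of_exponent_le (by norm_num : (1:ℝ) ≤ 2) hα1
    calc |secondDiff (T j) x h|
        ≤ C * (2 ^ (j : ℕ) * (2 * h) + 1) * (K * (2 ^ (j : ℕ) * (2 * h)) ^ α * h) :=
          (hcount j).abs_secondDiff_tsum_le hh.le (by positivity) (h2 j · x h hh)
      _ ≤ C * 3 * (K * (2 * ((2:ℝ) ^ (j : ℕ) * h) ^ α) * h) := by gcongr; linarith
      _ = 6 * C * K * (2 ^ (j : ℕ) * h) ^ α * h := by ring
  rw [hΨ, secondDiff_tsum (hTsum _) (hTsum _) (hTsum _)]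
  calc |∑' j, secondDiff (T j) x h| ≤ ∑' j, |secondDiff (T j) x h| :=
        abs_tsum_le_tsum_abs ((summable_geometric_two_pnat.mul_left (4 * C * M)).of_nonneg_of_le
          (fun _ => abs_nonneg _) hbig)
    _ ≤ 2 * (2 * (6 * C * K) / (2 ^ α - 1) + 2 * (4 * C * M)) * h :=
        tsum_pnat_le_of_dyadic hα0 hα1 hh (by positivity) (fun _ => abs_nonneg _) hbig hsmall
    _ = C * (24 * K / (2 ^ α - 1) + 16 * M) * h := by ring

end Levels

lemma AssumpV.exists_bounds {s : ℝ} {φ : ℤ → ℝ → ℝ} {ψ : ℕ+ → ℤ → ℝ → ℝ} (hs : 1 < s)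
    (hV : AssumpV s φ ψ) :
    ∃ α, 0 < α ∧ α ≤ 1 ∧ ∃ B > 0, ∃ L > 0,
      (∀ k y, |φ k y| ≤ B) ∧
      (∀ j k y, |ψ j k y| ≤ B * (2:ℝ) ^ (((j : ℕ) : ℝ) * (0 + 1 / 2))) ∧
      (∀ k x h, 0 < h → |secondDiff (φ k) x h| ≤ L * (2 * h) ^ α * h) ∧
      ∀ j k x h, 0 < h → |secondDiff (ψ j k) x h| ≤
        L * (2:ℝ) ^ (((j : ℕ) : ℝ) * ((1 + α) + 1 / 2)) * (2 * h) ^ α * h := by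
  obtain ⟨hφC, hψC, hHol⟩ := hV
  set α := min (s - 1) (1 / 2)
  have hα0 : 0 < α := lt_min (by linarith) (by norm_num)
  have hα1 : α < 1 := (min_le_right _ _).trans_lt (by norm_num)
  have hC1 : ((⌊s⌋₊ : ℕ) : WithTop ℕ∞) ≠ 0 := by exact_mod_cast (Nat.floor_pos.2 hs.le).ne'
  obtain ⟨B, hB, hφ0, hψ0⟩ := hHol 0 le_rfl (by linarith)
  obtain ⟨L, hL, hφ1, hψ1⟩ := hHol (1 + α) (by linarith) (by linarith [min_le_left (s - 1) (1 / 2)])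
  exact ⟨α, hα0, hα1.le, B, hB, L, hL, fun k => (hφ0 k).abs_le, fun j k => (hψ0 j k).abs_le,
    fun k x h hh => (hφ1 k).abs_secondDiff_le hα0.le hα1 ((hφC k).differentiable hC1) x hh,
    fun j k x h hh => (hψ1 j k).abs_secondDiff_le hα0.le hα1 ((hψC j k).differentiable hC1) x hh⟩

lemma abs_le_of_two_rpow_mul_abs_le {n : ℕ} {c M p : ℝ} (hc : (2:ℝ) ^ ((n : ℝ) * p) * |c| ≤ M) :
    |c| ≤ M * (2:ℝ) ^ (-((n : ℝ) * p)) := by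
  rw [Real.rpow_neg zero_le_two, ← div_eq_mul_inv, le_div_iff₀ (by positivity), mul_comm]
  exact hc

lemma abs_mul_le_of_decay {n : ℕ} {c M B : ℝ} {g : ℝ → ℝ}
    (hc : (2:ℝ) ^ ((n : ℝ) * (3 / 2)) * |c| ≤ M)
    (hg : ∀ y, |g y| ≤ B * (2:ℝ) ^ ((n : ℝ) * (0 + 1 / 2))) (y : ℝ) :
    |c * g y| ≤ M * B * (1 / 2) ^ n := by
  have hM : 0 ≤ M := (by positivity : (0:ℝ) ≤ 2 ^ ((n : ℝ) * (3 / 2)) * |c|).trans hc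
  calc |c * g y| = |c| * |g y| := abs_mul _ _
    _ ≤ M * (2:ℝ) ^ (-((n : ℝ) * (3 / 2))) * (B * (2:ℝ) ^ ((n : ℝ) * (0 + 1 / 2))) :=
        mul_le_mul (abs_le_of_two_rpow_mul_abs_le hc) (hg y) (abs_nonneg _) (by positivity)
    _ = M * B * ((2:ℝ) ^ (-((n : ℝ) * (3 / 2))) * (2:ℝ) ^ ((n : ℝ) * (0 + 1 / 2))) := by ring
    _ = M * B * (1 / 2) ^ n := by
        rw [← Real.rpow_add two_pos, show -((n : ℝ) * (3 / 2)) + n * (0 + 1 / 2) = -(n : ℝ) by ring,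
          Real.rpow_neg zero_le_two, Real.rpow_natCast, one_div, inv_pow]

lemma abs_mul_secondDiff_le_of_decay {n : ℕ} {c M L α : ℝ} {g : ℝ → ℝ}
    (hc : (2:ℝ) ^ ((n : ℝ) * (3 / 2)) * |c| ≤ M)
    (hg : ∀ x h, 0 < h → |secondDiff g x h| ≤
      L * (2:ℝ) ^ ((n : ℝ) * ((1 + α) + 1 / 2)) * (2 * h) ^ α * h)
    (x : ℝ) {h : ℝ} (hh : 0 < h) :
    |c * secondDiff g x h| ≤ M * L * (2 ^ n * (2 * h)) ^ α * h := by
  have hM : 0 ≤ M := (by positivity : (0:ℝ) ≤ 2 ^ ((n : ℝ) * (3 / 2)) * |c|).trans hc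
  calc |c * secondDiff g x h| = |c| * |secondDiff g x h| := abs_mul _ _
    _ ≤ M * (2:ℝ) ^ (-((n : ℝ) * (3 / 2))) *
          (L * (2:ℝ) ^ ((n : ℝ) * ((1 + α) + 1 / 2)) * (2 * h) ^ α * h) :=
        mul_le_mul (abs_le_of_two_rpow_mul_abs_le hc) (hg x h hh) (abs_nonneg _) (by positivity)
    _ = M * L * ((2:ℝ) ^ (-((n : ℝ) * (3 / 2)) + (n : ℝ) * ((1 + α) + 1 / 2)) * (2 * h) ^ α)
          * h := by rw [Real.rpow_add two_pos]; ring
    _ = M * L * (2 ^ n * (2 * h)) ^ α * h := by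
        rw [show -((n : ℝ) * (3 / 2)) + n * ((1 + α) + 1 / 2) = n * α by ring,
          Real.rpow_natCast_mul zero_le_two, ← Real.mul_rpow (by positivity) (by positivity)]

section FrameSum

variable {φ : ℤ → ℝ → ℝ} {ψ : ℕ+ → ℤ → ℝ → ℝ} {a : ℤ → ℝ} {b : ℕ+ → ℤ → ℝ} {C M B : ℝ}

lemma abs_frameSum_le (hφ : SupportCountLE φ C 1)
    (hψ : ∀ j : ℕ+, SupportCountLE (ψ j) C (2 ^ (j : ℕ))) (hM : 0 ≤ M) (hB : 0 ≤ B)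
    (ha : ∀ k, |a k| ≤ M) (hφ0 : ∀ k y, |φ k y| ≤ B)
    (hbψ0 : ∀ j k y, |b j k * ψ j k y| ≤ M * B * (1 / 2) ^ (j : ℕ)) (y : ℝ) :
    |frameSum φ ψ a b y| ≤ C * (2 * B) * M :=
  calc |frameSum φ ψ a b y|
      ≤ |∑' k, a k * φ k y| + |∑' p : ℕ+ × ℤ, b p.1 p.2 * ψ p.1 p.2 y| := abs_add_le _ _
    _ ≤ C * (M * B) + C * (M * B) :=
        add_le_add
          (hφ.abs_tsum_mul_apply_le (by positivity) fun k => by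
            rw [abs_mul]; exact mul_le_mul (ha k) (hφ0 k y) (abs_nonneg _) hM)
          (abs_tsum_prod_levels_le hψ (by positivity) hbψ0 y)
    _ = C * (2 * B) * M := by ring

lemma abs_secondDiff_frameSum_le (hφ : SupportCountLE φ C 1)
    (hψ : ∀ j : ℕ+, SupportCountLE (ψ j) C (2 ^ (j : ℕ))) (hC : 0 ≤ C) (hM : 0 ≤ M)
    (hB : 0 ≤ B) {L α : ℝ} (hL : 0 ≤ L) (hα0 : 0 < α) (hα1 : α ≤ 1)
    (ha : ∀ k, |a k| ≤ M) (hφ0 : ∀ k y, |φ k y| ≤ B)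
    (hφ2 : ∀ k x h, 0 < h → |secondDiff (φ k) x h| ≤ L * (2 * h) ^ α * h)
    (hbψ0 : ∀ j k y, |b j k * ψ j k y| ≤ M * B * (1 / 2) ^ (j : ℕ))
    (hbψ2 : ∀ j k x h, 0 < h →
      |b j k * secondDiff (ψ j k) x h| ≤ M * L * (2 ^ (j : ℕ) * (2 * h)) ^ α * h)
    (x : ℝ) {h : ℝ} (hh : 0 < h) :
    |secondDiff (frameSum φ ψ a b) x h| ≤
      C * (6 * L + 20 * B + 24 * L / (2 ^ α - 1)) * M * h := by
  unfold frameSum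
  rw [secondDiff_add]
  calc _ ≤ _ := abs_add_le _ _
    _ ≤ C * M * (6 * L + 4 * B) * h + C * (24 * (M * L) / (2 ^ α - 1) + 16 * (M * B)) * h :=
        add_le_add
          (hφ.abs_secondDiff_tsum_le_of_unit_scale hC hM hB hL hα0.le hα1 ha hφ0 hφ2 x hh)
          (abs_secondDiff_tsum_prod_levels_le hψ hC (by positivity) hbψ0 (by positivity) hα0
            hα1 hbψ2 x hh)
    _ = C * (6 * L + 20 * B + 24 * L / (2 ^ α - 1)) * M * h := by ring

end FrameSum

theorem statement_16_general
    (φ : ℤ → ℝ → ℝ) (ψ : ℕ+ → ℤ → ℝ → ℝ)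
    (s : ℝ) (hs : 1 < s)
    (CΓ : ℝ) (hCΓ : 0 < CΓ)
    (hIII : AssumpIII CΓ φ ψ)
    (hV : AssumpV s φ ψ) :
    ∃ C > (0:ℝ), ∀ (a : ℤ → ℝ) (b : ℕ+ → ℤ → ℝ) (Ca Cb : ℝ),
      (∀ k, |a k| ≤ Ca) →
      (∀ (j : ℕ+) (k : ℤ), (2:ℝ) ^ (((j:ℕ):ℝ) * (3 / 2)) * |b j k| ≤ Cb) →
      (∀ x : ℝ, {k : ℤ | φ k x ≠ 0}.Finite) ∧
      (∀ x : ℝ, Summable fun p : ℕ+ × ℤ => |b p.1 p.2 * ψ p.1 p.2 x|) ∧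
      Bdd (frameSum φ ψ a b) ∧
      MemZygmundClass (frameSum φ ψ a b) ∧
      ∀ y x h : ℝ, 0 < h →
        |frameSum φ ψ a b y| +
          |frameSum φ ψ a b (x + h) - 2 * frameSum φ ψ a b x +
            frameSum φ ψ a b (x - h)| / h ≤
          C * max Ca Cb := by
  obtain ⟨α, hα0, hα1, B, hB, L, hL, hφ0, hψ0, hφ2, hψ2⟩ := hV.exists_bounds hs
  have hφ := hIII.supportCountLE_phi
  have hψ := hIII.supportCountLE_psi
  set Z := 6 * L + 20 * B + 24 * L / (2 ^ α - 1)
  have hZ : 0 ≤ Z := by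
    have : 0 < (2:ℝ) ^ α - 1 := by linarith [Real.one_lt_rpow one_lt_two hα0]
    positivity
  refine ⟨CΓ * (2 * B + Z), by positivity, fun a b Ca Cb ha hb => ?_⟩
  set M := max Ca Cb
  have ha' : ∀ k, |a k| ≤ M := fun k => (ha k).trans (le_max_left _ _)
  have hM : 0 ≤ M := (abs_nonneg _).trans (ha' 0)
  have hb' : ∀ (j : ℕ+) k, (2:ℝ) ^ (((j:ℕ):ℝ) * (3 / 2)) * |b j k| ≤ M := fun j k =>
    (hb j k).trans (le_max_right _ _)
  have hbψ0 := fun j k => abs_mul_le_of_decay (hb' j k) (hψ0 j k)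
  have hbψ2 := fun j k => abs_mul_secondDiff_le_of_decay (hb' j k) (hψ2 j k)
  have hbdd := abs_frameSum_le hφ hψ hM hB.le ha' hφ0 hbψ0
  have hzyg : ∀ x h, 0 < h → |secondDiff (frameSum φ ψ a b) x h| ≤ CΓ * Z * M * h :=
    fun x _ hh => abs_secondDiff_frameSum_le hφ hψ hCΓ.le hM hB.le hL.le hα0 hα1 ha' hφ0 hφ2
      hbψ0 hbψ2 x hh
  refine ⟨hφ.finite_ne_zero, summable_abs_prod_levels hψ (by positivity) hbψ0, ⟨_, hbdd⟩,
    ⟨_, hzyg⟩, fun y x h hh => ?_⟩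
  have hquot := (div_le_iff₀ hh).2 (hzyg x h hh)
  unfold secondDiff at hquot
  linarith [hbdd y]

/-- the easy direction of Theorem 3.1 for `r = 1`: coefficients
with decay `2^{-3j/2}` produce a bounded function in the Zygmund class, with
quantitative control by `C·max(C_a, C_b)`. -/
theorem statement_16
    (φ : ℤ → ℝ → ℝ) (ψ : ℕ+ → ℤ → ℝ → ℝ)
    (hcs : CompactlySupported φ ψ)
    (s : ℝ) (hs : 1 < s)
    (CΓ : ℝ) (hCΓ : 0 < CΓ)
    (hIII : AssumpIII CΓ φ ψ)
    (hV : AssumpV s φ ψ) :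
    ∃ C > (0:ℝ), ∀ (a : ℤ → ℝ) (b : ℕ+ → ℤ → ℝ) (Ca Cb : ℝ),
      (∀ k, |a k| ≤ Ca) →
      (∀ (j : ℕ+) (k : ℤ), (2:ℝ) ^ (((j:ℕ):ℝ) * (3 / 2)) * |b j k| ≤ Cb) →
      (∀ x : ℝ, {k : ℤ | φ k x ≠ 0}.Finite) ∧
      (∀ x : ℝ, Summable fun p : ℕ+ × ℤ => |b p.1 p.2 * ψ p.1 p.2 x|) ∧
      Bdd (frameSum φ ψ a b) ∧
      MemZygmundClass (frameSum φ ψ a b) ∧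
      ∀ y x h : ℝ, 0 < h →
        |frameSum φ ψ a b y| +
          |frameSum φ ψ a b (x + h) - 2 * frameSum φ ψ a b x +
            frameSum φ ψ a b (x - h)| / h ≤
          C * max Ca Cb :=
  statement_16_general φ ψ s hs CΓ hCΓ hIII hV

end FrameReg
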